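/- Fix κ² > 0 and define h : (0,∞) → ℝ by h(α) := (1/2π) ∫_{−π}^{π} ( α² + κ² sin²x )^{−1/2} dx. Then h is strictly decreasing on (0,∞), h(α) → +∞ as α → 0⁺, and h(α) → 0 as α → +∞. -/

import Mathlib

open Real Set MeasureTheory Filter

/-- The function `h(α) = (1/2π) ∫_{−π}^{π} (α² + κ² sin²x)^{−1/2} dx`. -/
noncomputable def alphaIntegral (κ : ℝ) (α : ℝ) : ℝ :=
  (1 / (2 * π)) * ∫ x in (-π)..π, 1 / Real.sqrt (α ^ 2 + κ ^ 2 * Real.sin x ^ 2)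

/-!
The integrand `(α² + κ² sin² x)^{-1/2}` is strictly decreasing in `α > 0`, which gives strict
monotonicity, and it is at most `1/α`, which gives the limit at infinity. Near `α = 0` we use
`sin² x ≤ x²`: on `[0, π/2]` the integrand is at least `((1 + κ²)^{1/2} (x + α))⁻¹`, whose
integral `(1 + κ²)^{-1/2} log ((π/2 + α) / α)` tends to infinity.
-/

open Topology

section

variable (κ : ℝ) {α : ℝ}

lemma continuous_one_div_sqrt_sq_add_mul_sin_sq (hα : α ≠ 0) :
    Continuous fun x => 1 / √(α ^ 2 + κ ^ 2 * sin x ^ 2) :=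
  continuous_const.div (by fun_prop) fun x => (sqrt_pos.2 (by positivity)).ne'

lemma one_div_sqrt_sq_add_mul_sin_sq_lt {β : ℝ} (hα : 0 < α) (hαβ : α < β) (x : ℝ) :
    1 / √(β ^ 2 + κ ^ 2 * sin x ^ 2) < 1 / √(α ^ 2 + κ ^ 2 * sin x ^ 2) := by
  gcongr

lemma alphaIntegral_strictAntiOn : StrictAntiOn (alphaIntegral κ) (Ioi 0) := by
  intro α (hα : 0 < α) β (hβ : 0 < β) hαβ
  have hint := intervalIntegral.integral_lt_integral_of_continuousOn_of_le_of_exists_lt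
    (neg_lt_self pi_pos) (continuous_one_div_sqrt_sq_add_mul_sin_sq κ hβ.ne').continuousOn
    (continuous_one_div_sqrt_sq_add_mul_sin_sq κ hα.ne').continuousOn
    (fun x _ => (one_div_sqrt_sq_add_mul_sin_sq_lt κ hα hαβ x).le)
    ⟨0, ⟨neg_nonpos.2 pi_pos.le, pi_pos.le⟩, one_div_sqrt_sq_add_mul_sin_sq_lt κ hα hαβ 0⟩
  unfold alphaIntegral
  gcongr

lemma alphaIntegral_nonneg : 0 ≤ alphaIntegral κ α := by
  unfold alphaIntegral
  exact mul_nonneg (by positivity)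
    (intervalIntegral.integral_nonneg (neg_le_self pi_pos.le) fun x _ => by positivity)

lemma alphaIntegral_le_inv (hα : 0 < α) : alphaIntegral κ α ≤ α⁻¹ := by
  have hle : ∀ x ∈ Icc (-π) π, 1 / √(α ^ 2 + κ ^ 2 * sin x ^ 2) ≤ α⁻¹ := fun x _ => by
    rw [one_div]
    exact inv_anti₀ hα <| (le_sqrt' hα).2 <| le_add_of_nonneg_right (by positivity)
  have hint := intervalIntegral.integral_mono_on (μ := volume) (neg_le_self pi_pos.le)
    ((continuous_one_div_sqrt_sq_add_mul_sin_sq κ hα.ne').intervalIntegrable _ _)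
    intervalIntegrable_const hle
  rw [intervalIntegral.integral_const, smul_eq_mul] at hint
  calc alphaIntegral κ α ≤ 1 / (2 * π) * ((π - -π) * α⁻¹) := by
        unfold alphaIntegral
        gcongr
    _ = α⁻¹ := by field_simp; ring

lemma tendsto_alphaIntegral_atTop : Tendsto (alphaIntegral κ) atTop (𝓝 0) :=
  squeeze_zero' (Eventually.of_forall fun _ => alphaIntegral_nonneg κ)
    (eventually_gt_atTop 0 |>.mono fun _ => alphaIntegral_le_inv κ) tendsto_inv_atTop_zero

lemma integral_inv_add_const {b : ℝ} (hα : 0 < α) (hb : 0 ≤ b) :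
    ∫ x in (0 : ℝ)..b, (x + α)⁻¹ = log ((b + α) / α) := by
  rw [intervalIntegral.integral_comp_add_right (fun x => x⁻¹), zero_add,
    integral_inv_of_pos hα (by positivity)]

lemma inv_sqrt_one_add_sq_mul_inv_add_le {x : ℝ} (hα : 0 < α) (hx : 0 ≤ x) :
    (√(1 + κ ^ 2))⁻¹ * (x + α)⁻¹ ≤ 1 / √(α ^ 2 + κ ^ 2 * sin x ^ 2) := by
  rw [← mul_inv, one_div, ← sqrt_sq (by positivity : 0 ≤ x + α), ← sqrt_mul (by positivity)]
  gcongr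
  nlinarith [sin_sq_le_sq (x := x), sq_nonneg κ, mul_nonneg (sq_nonneg κ) (sq_nonneg (x - α)),
    mul_nonneg (sq_nonneg κ) (mul_nonneg hx hα.le)]

lemma log_le_alphaIntegral (hα : 0 < α) :
    (2 * π * √(1 + κ ^ 2))⁻¹ * log ((π / 2 + α) / α) ≤ alphaIntegral κ α := by
  have hπ := pi_pos
  have hcont := continuous_one_div_sqrt_sq_add_mul_sin_sq κ hα.ne'
  have hlower : (√(1 + κ ^ 2))⁻¹ * ∫ x in (0 : ℝ)..(π / 2), (x + α)⁻¹
      ≤ ∫ x in (0 : ℝ)..(π / 2), 1 / √(α ^ 2 + κ ^ 2 * sin x ^ 2) := by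
    rw [← intervalIntegral.integral_const_mul]
    refine intervalIntegral.integral_mono_on (by positivity) (ContinuousOn.intervalIntegrable ?_)
      (hcont.intervalIntegrable _ _) fun x hx => inv_sqrt_one_add_sq_mul_inv_add_le κ hα hx.1
    exact continuousOn_const.mul <| (continuousOn_id.add continuousOn_const).inv₀ fun x hx => by
      rw [uIcc_of_le (by positivity)] at hx
      exact (add_pos_of_nonneg_of_pos hx.1 hα).ne'
  have hsub : ∫ x in (0 : ℝ)..(π / 2), 1 / √(α ^ 2 + κ ^ 2 * sin x ^ 2)
      ≤ ∫ x in (-π)..π, 1 / √(α ^ 2 + κ ^ 2 * sin x ^ 2) :=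
    intervalIntegral.integral_mono_interval (by linarith) (by positivity) (by linarith)
      (Eventually.of_forall fun x => by positivity) (hcont.intervalIntegrable _ _)
  rw [integral_inv_add_const hα (by positivity)] at hlower
  calc (2 * π * √(1 + κ ^ 2))⁻¹ * log ((π / 2 + α) / α)
      = 1 / (2 * π) * ((√(1 + κ ^ 2))⁻¹ * log ((π / 2 + α) / α)) := by
        rw [mul_inv, one_div, mul_assoc]
    _ ≤ alphaIntegral κ α := by
        unfold alphaIntegral
        gcongr
        exact hlower.trans hsub

lemma tendsto_alphaIntegral_nhdsGT_zero :
    Tendsto (alphaIntegral κ) (𝓝[>] 0) atTop := by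
  have hlog : Tendsto (fun α : ℝ => log ((π / 2 + α) / α)) (𝓝[>] 0) atTop := by
    refine tendsto_log_atTop.comp <|
      ((tendsto_inv_nhdsGT_zero.const_mul_atTop (by positivity : 0 < π / 2)).atTop_add
        (tendsto_const_nhds (x := (1 : ℝ)))).congr' ?_
    filter_upwards [self_mem_nhdsWithin] with α (hα : 0 < α)
    field_simp
  have hc : 0 < (2 * π * √(1 + κ ^ 2))⁻¹ := by positivity
  refine tendsto_atTop_mono' _ ?_ (hlog.const_mul_atTop hc)
  filter_upwards [self_mem_nhdsWithin] with α hα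
  exact log_le_alphaIntegral κ hα

end

theorem alphaIntegral_strictAnti_and_limits_general (κ : ℝ) :
    StrictAntiOn (alphaIntegral κ) (Ioi 0) ∧
    Tendsto (alphaIntegral κ) (nhdsWithin 0 (Ioi 0)) atTop ∧
    Tendsto (alphaIntegral κ) atTop (nhds 0) :=
  ⟨alphaIntegral_strictAntiOn κ, tendsto_alphaIntegral_nhdsGT_zero κ,
    tendsto_alphaIntegral_atTop κ⟩

/-- **Monotonicity and limits of `h`**: for `κ² > 0`, the function
`h(α) = (1/2π) ∫_{−π}^{π} (α² + κ² sin²x)^{−1/2} dx` is strictly decreasing on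
`(0, ∞)`, tends to `+∞` as `α → 0⁺`, and tends to `0` as `α → +∞`. -/
theorem alphaIntegral_strictAnti_and_limits (κ : ℝ) (hκ : 0 < κ ^ 2) :
    StrictAntiOn (alphaIntegral κ) (Ioi 0) ∧
    Tendsto (alphaIntegral κ) (nhdsWithin 0 (Ioi 0)) atTop ∧
    Tendsto (alphaIntegral κ) atTop (nhds 0) :=
  alphaIntegral_strictAnti_and_limits_general κ
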